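/- Let Γ and G be finite nilpotent groups of order n and let β : Γ → Hol(G) be a homomorphism with component matrix β_{pq} = π_q ∘ β ∘ ι_p : Γ_p → Hol(G_q). Then β is a regular embedding if and only if each diagonal component β_{pp} : Γ_p → Hol(G_p) is a regular embedding. -/

import Mathlib

/-!
Both sides make each coordinate action of `β` on `G_q` transitive. For `p ≠ q`, the image of
`Γ_p` is then a normal subgroup of `Γ` whose orbits on `G_q` are blocks, so their size divides
both `|Γ_p|` and `|G_q|`; these are coprime, hence `Γ_p` acts trivially on `G_q`. Thus `β` is the
product of its diagonal components, and a product map is injective, resp. regular, exactly when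
each factor is.
-/

/-- The holomorph of a group `G`: the subgroup of `Perm G` generated by the right regular
representation `ρ(g) : x ↦ x * g⁻¹` together with the automorphisms of `G`. -/
def Hol (G : Type*) [Group G] : Subgroup (Equiv.Perm G) :=
  Subgroup.closure
    ((Set.range fun g : G => Equiv.mulRight g⁻¹) ∪
      (Set.range fun f : MulAut G => (f : G ≃* G).toEquiv))

open MulAction in
theorem MulAction.smul_eq_self_of_normal_of_coprime {A X : Type*} [Group A] [MulAction A X]
    [IsPretransitive A X] (N : Subgroup A) [N.Normal]
    (hcop : (Nat.card N).Coprime (Nat.card X)) {a : A} (ha : a ∈ N) (x : X) : a • x = x := by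
  have hdvd_X : (orbit N x).ncard ∣ Nat.card X :=
    (IsBlock.orbit_of_normal x).ncard_dvd_card ⟨x, mem_orbit_self x⟩
  have hdvd_N : (orbit N x).ncard ∣ Nat.card N := by
    rw [← Nat.card_coe_set_eq, Nat.card_congr (orbitEquivQuotientStabilizer N x)]
    exact Subgroup.card_quotient_dvd_card _
  obtain ⟨z, hz⟩ := Set.ncard_eq_one.mp (Nat.eq_one_of_dvd_coprimes hcop hdvd_N hdvd_X)
  have hx : x ∈ orbit N x := mem_orbit_self x
  have hax : a • x ∈ orbit N x := ⟨⟨a, ha⟩, rfl⟩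
  rw [hz, Set.mem_singleton_iff] at hx hax
  rw [hax, hx]

section Pi

variable {ι : Type*} [DecidableEq ι] {Γ : ι → Type*}

instance MonoidHom.normal_range_mulSingle [∀ i, Group (Γ i)] (p : ι) :
    (MonoidHom.mulSingle Γ p).range.Normal where
  conj_mem := by
    rintro _ ⟨γ, rfl⟩ g
    refine ⟨g p * γ * (g p)⁻¹, funext fun i => ?_⟩
    obtain rfl | hi := eq_or_ne i p <;> simp [Pi.mulSingle_eq_of_ne, *]

theorem MonoidHom.map_mulSingle_eq_one_of_coprime {X : Type*} [∀ i, Group (Γ i)]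
    (f : (∀ i, Γ i) →* Equiv.Perm X) (hf : ∀ x y : X, ∃ γ, f γ x = y) {p : ι}
    (hcop : (Nat.card (Γ p)).Coprime (Nat.card X)) (γ : Γ p) : f (Pi.mulSingle p γ) = 1 := by
  let _ : MulAction (∀ i, Γ i) X := MulAction.compHom X f
  have : MulAction.IsPretransitive (∀ i, Γ i) X := ⟨hf⟩
  have hcard : Nat.card (MonoidHom.mulSingle Γ p).range = Nat.card (Γ p) :=
    (Nat.card_congr (Equiv.ofInjective _ (Pi.mulSingle_injective p))).symm
  exact Equiv.ext <| MulAction.smul_eq_self_of_normal_of_coprime _ (hcard ▸ hcop)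
    (MonoidHom.mem_range.mpr ⟨γ, rfl⟩)

theorem MonoidHom.map_eq_map_mulSingle_of_map_mulSingle_eq_one [Finite ι] [∀ i, Monoid (Γ i)]
    {M : Type*} [Monoid M] (f : (∀ i, Γ i) →* M) {q : ι}
    (hf : ∀ p ≠ q, ∀ γ : Γ p, f (Pi.mulSingle p γ) = 1) (γ : ∀ i, Γ i) :
    f γ = f (Pi.mulSingle q (γ q)) := by
  suffices f = (f.comp (MonoidHom.mulSingle Γ q)).comp (Pi.evalMonoidHom Γ q) from
    DFunLike.congr_fun this γ
  refine MonoidHom.pi_ext fun p γ => ?_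
  obtain rfl | hp := eq_or_ne p q
  · simp
  · simp [hf p hp, Pi.mulSingle_eq_of_ne hp.symm]

theorem MonoidHom.coe_eq_piMap_of_coprime [Finite ι] [∀ i, Group (Γ i)] {X : ι → Type*}
    {H : ∀ i, Subgroup (Equiv.Perm (X i))} (β : (∀ i, Γ i) →* ∀ i, H i)
    (htrans : ∀ q (x y : X q), ∃ γ, (β γ q : Equiv.Perm (X q)) x = y)
    (hcop : ∀ p q, p ≠ q → (Nat.card (Γ p)).Coprime (Nat.card (X q))) :
    ⇑β = Pi.map fun q γ => β (Pi.mulSingle q γ) q := by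
  funext γ q
  let f : (∀ i, Γ i) →* Equiv.Perm (X q) :=
    (H q).subtype.comp ((Pi.evalMonoidHom _ q).comp β)
  have hoff : ∀ p ≠ q, ∀ γ : Γ p, f (Pi.mulSingle p γ) = 1 := fun p hp γ =>
    f.map_mulSingle_eq_one_of_coprime (htrans q) (hcop p q hp) γ
  exact Subtype.ext (f.map_eq_map_mulSingle_of_map_mulSingle_eq_one hoff γ)

theorem Set.existsUnique_mem_pi_smul_eq_iff {M X : ι → Type*} [∀ i, SMul (M i) (X i)]
    [∀ i, Nonempty (X i)] (S : ∀ i, Set (M i)) :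
    (∀ x y : ∀ i, X i, ∃! t, t ∈ Set.univ.pi S ∧ (fun i => t i • x i) = y) ↔
      ∀ i (x y : X i), ∃! t, t ∈ S i ∧ t • x = y := by
  constructor
  · intro h i x y
    let z : ∀ j, X j := fun _ => Classical.arbitrary _
    obtain ⟨t, ⟨htS, hty⟩, huniq⟩ := h (Function.update z i x) (Function.update z i y)
    refine ⟨t i, ⟨htS i trivial, by simpa using congrFun hty i⟩, fun s ⟨hsS, hsy⟩ => ?_⟩
    have hupdate : Function.update t i s = t := by
      refine huniq _ ⟨(Set.update_mem_pi_iff_of_mem htS).mpr fun _ => hsS, funext fun j => ?_⟩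
      obtain rfl | hj := eq_or_ne j i
      · simpa using hsy
      · simpa [hj] using congrFun hty j
    simpa using congrFun hupdate i
  · intro h x y
    choose t ht huniq using fun i => h i (x i) (y i)
    refine ⟨t, ⟨fun i _ => (ht i).1, funext fun i => (ht i).2⟩, fun s ⟨hsS, hsy⟩ => ?_⟩
    exact funext fun i => huniq i (s i) ⟨hsS i trivial, congrFun hsy i⟩

end Pi

theorem regular_embedding_iff_diagonal_general (n : ℕ)
    (Γ G : n.primeFactors → Type) [∀ p, Group (Γ p)] [∀ p, Group (G p)]
    (hΓ : ∀ p : n.primeFactors, Nat.card (Γ p) = (p : ℕ) ^ n.factorization (p : ℕ))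
    (hG : ∀ p : n.primeFactors, Nat.card (G p) = (p : ℕ) ^ n.factorization (p : ℕ))
    (β : (∀ p, Γ p) →* ∀ p, Hol (G p)) :
    (Function.Injective β ∧
      ∀ x y : ∀ p, G p, ∃! t, t ∈ Set.range β ∧
        (fun p => ((t p : Equiv.Perm (G p)) (x p))) = y) ↔
    (∀ p : n.primeFactors,
      Function.Injective (fun γ : Γ p => β (Pi.mulSingle p γ) p) ∧
      ∀ x y : G p, ∃! t : Hol (G p),
        (∃ γ : Γ p, β (Pi.mulSingle p γ) p = t) ∧ (t : Equiv.Perm (G p)) x = y) := by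
  have hcop (p q : n.primeFactors) (hpq : p ≠ q) : (Nat.card (Γ p)).Coprime (Nat.card (G q)) := by
    rw [hΓ, hG]
    exact Nat.coprime_pow_primes _ _ (Nat.prime_of_mem_primeFactors p.2)
      (Nat.prime_of_mem_primeFactors q.2) (Subtype.coe_injective.ne hpq)
  have hdiag := (β.coe_eq_piMap_of_coprime · hcop)
  constructor
  · rintro ⟨hinj, hreg⟩
    have hβ := hdiag fun q x y => by
      obtain ⟨_, ⟨⟨γ, rfl⟩, hγ⟩, -⟩ := hreg (Pi.mulSingle q x) (Pi.mulSingle q y)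
      exact ⟨γ, by simpa using congrFun hγ q⟩
    rw [hβ, Set.range_piMap] at hreg
    rw [hβ, Pi.map_injective] at hinj
    exact fun p => ⟨hinj p, (Set.existsUnique_mem_pi_smul_eq_iff _).mp hreg p⟩
  · intro h
    have hβ := hdiag fun q x y => by
      obtain ⟨_, ⟨⟨γ, rfl⟩, hγ⟩, -⟩ := (h q).2 x y
      exact ⟨_, hγ⟩
    rw [hβ, Set.range_piMap, Pi.map_injective]
    exact ⟨fun p => (h p).1, (Set.existsUnique_mem_pi_smul_eq_iff _).mpr fun p => (h p).2⟩

/-- Let `Γ = ∏_p Γ_p` and `G = ∏_p G_p` be nilpotent groups of order `n` given by their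
Sylow decompositions, and `β : Γ →* Hol G = ∏_p Hol G_p` a homomorphism with component
matrix `β_{pq} = π_q ∘ β ∘ ι_p`.  Then `β` is a regular embedding (injective with image a
regular group of permutations of `G`) if and only if each diagonal component
`β_{pp} : Γ_p → Hol G_p` is a regular embedding. -/
theorem regular_embedding_iff_diagonal (n : ℕ) (hn : 0 < n)
    (Γ G : n.primeFactors → Type) [∀ p, Group (Γ p)] [∀ p, Group (G p)]
    [∀ p, Finite (Γ p)] [∀ p, Finite (G p)]
    (hΓ : ∀ p : n.primeFactors, Nat.card (Γ p) = (p : ℕ) ^ n.factorization (p : ℕ))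
    (hG : ∀ p : n.primeFactors, Nat.card (G p) = (p : ℕ) ^ n.factorization (p : ℕ))
    (β : (∀ p, Γ p) →* ∀ p, Hol (G p)) :
    (Function.Injective β ∧
      ∀ x y : ∀ p, G p, ∃! t, t ∈ Set.range β ∧
        (fun p => ((t p : Equiv.Perm (G p)) (x p))) = y) ↔
    (∀ p : n.primeFactors,
      Function.Injective (fun γ : Γ p => β (Pi.mulSingle p γ) p) ∧
      ∀ x y : G p, ∃! t : Hol (G p),
        (∃ γ : Γ p, β (Pi.mulSingle p γ) p = t) ∧ (t : Equiv.Perm (G p)) x = y) :=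
  regular_embedding_iff_diagonal_general n Γ G hΓ hG β
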